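/- The twelve matrices E1, E2, E3, E31, E32, A1, A2, A3, A31, A32, W1, W2 in M_6(ℝ), defined so that a general linear combination equals the displayed 6×6 matrix with entries like a1/2, e1−k1, etc., are linearly independent, and their real span g' is closed under the matrix commutator, i.e., g' is a Lie subalgebra of gl(6,ℝ). -/

import Mathlib

open Matrix

abbrev M6 := Matrix (Fin 6) (Fin 6) ℝ

noncomputable def E1 : M6 := !![0,0,0,1,0,0; 0,0,0,0,0,0; 0,0,0,0,0,0; 0,0,0,0,0,0; 0,0,0,0,0,0; 0,0,0,0,0,0]
noncomputable def E2 : M6 := !![0,0,0,0,0,0; 0,0,0,0,1,0; 0,0,0,0,0,0; 0,0,0,0,0,0; 0,0,0,0,0,0; 0,0,0,0,0,0]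
noncomputable def E3 : M6 := !![0,0,0,0,0,0; 0,0,0,0,0,0; 0,0,0,0,0,1; 0,0,0,0,0,0; 0,0,0,0,0,0; 0,0,0,0,0,0]
noncomputable def E31 : M6 := !![0,0,0,0,0,1; 0,0,0,0,0,0; 0,0,0,1,0,0; 0,0,0,0,0,0; 0,0,0,0,0,0; 0,0,0,0,0,0]
noncomputable def E32 : M6 := !![0,0,0,0,0,0; 0,0,0,0,0,1; 0,0,0,0,1,0; 0,0,0,0,0,0; 0,0,0,0,0,0; 0,0,0,0,0,0]
noncomputable def A1 : M6 := !![(1/2),0,0,0,0,0; 0,0,0,0,0,0; 0,0,0,0,0,0; 0,0,0,(-1/2),0,0; 0,0,0,0,0,0; 0,0,0,0,0,0]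
noncomputable def A2 : M6 := !![0,0,0,0,0,0; 0,(1/2),0,0,0,0; 0,0,0,0,0,0; 0,0,0,0,0,0; 0,0,0,0,(-1/2),0; 0,0,0,0,0,0]
noncomputable def A3 : M6 := !![0,0,0,0,0,0; 0,0,0,0,0,0; 0,0,(1/2),0,0,0; 0,0,0,0,0,0; 0,0,0,0,0,0; 0,0,0,0,0,(-1/2)]
noncomputable def A31 : M6 := !![0,0,0,0,0,0; 0,0,0,0,0,0; 1,0,0,0,0,0; 0,0,0,0,0,-1; 0,0,0,0,0,0; 0,0,0,0,0,0]
noncomputable def A32 : M6 := !![0,0,0,0,0,0; 0,0,0,0,0,0; 0,1,0,0,0,0; 0,0,0,0,0,0; 0,0,0,0,0,-1; 0,0,0,0,0,0]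
noncomputable def W1 : M6 := !![0,0,0,-1,0,0; 0,0,0,0,0,0; 0,0,0,0,0,0; 1,0,0,0,0,0; 0,0,0,0,0,0; 0,0,0,0,0,0]
noncomputable def W2 : M6 := !![0,0,0,0,0,0; 0,0,0,0,-1,0; 0,0,0,0,0,0; 0,0,0,0,0,0; 0,1,0,0,0,0; 0,0,0,0,0,0]

noncomputable def gens : Set M6 := {E1, E2, E3, E31, E32, A1, A2, A3, A31, A32, W1, W2}

attribute [local instance 100] LieRing.ofAssociativeRing

noncomputable def gLie : LieSubalgebra ℝ M6 := LieSubalgebra.lieSpan ℝ M6 gens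

/-! Every real combination of the twelve matrices is the displayed matrix, whose twelve
coefficients can be read back off its entries; so the matrices are independent and their span is
exactly the set of matrices of that shape. A direct computation shows that the commutator of two
matrices of that shape has the same shape again. -/

noncomputable section

def gensFamily : Fin 12 → M6 := ![E1, E2, E3, E31, E32, A1, A2, A3, A31, A32, W1, W2]

theorem range_gensFamily : Set.range gensFamily = gens := by
  simp only [gensFamily, gens, Matrix.range_cons, Matrix.range_empty, Set.singleton_union,
    Set.union_empty]

/-- The displayed matrix, with `(e1, e2, e3, e31, e32, a1, a2, a3, a31, a32, k1, k2)` stored as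
`(c 0, …, c 11)`. -/
def coordMatrix (c : Fin 12 → ℝ) : M6 :=
  !![c 5 / 2, 0, 0, c 0 - c 10, 0, c 3;
     0, c 6 / 2, 0, 0, c 1 - c 11, c 4;
     c 8, c 9, c 7 / 2, c 3, c 4, c 2;
     c 10, 0, 0, -c 5 / 2, 0, -c 8;
     0, c 11, 0, 0, -c 6 / 2, -c 9;
     0, 0, 0, 0, 0, -c 7 / 2]

def coords (m : M6) : Fin 12 → ℝ :=
  ![m 0 3 + m 3 0, m 1 4 + m 4 1, m 2 5, m 0 5, m 1 5, 2 * m 0 0, 2 * m 1 1, 2 * m 2 2,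
    m 2 0, m 2 1, m 3 0, m 4 1]

theorem coords_coordMatrix : Function.LeftInverse coords coordMatrix := by
  intro c
  ext i
  fin_cases i <;> simp [coords, coordMatrix, mul_div_cancel₀]

theorem sum_smul_gensFamily (c : Fin 12 → ℝ) : ∑ i, c i • gensFamily i = coordMatrix c := by
  simp only [Fin.sum_univ_succ, Fin.sum_univ_zero, gensFamily, Matrix.cons_val_zero,
    Matrix.cons_val_succ, E1, E2, E3, E31, E32, A1, A2, A3, A31, A32, W1, W2, coordMatrix,
    Matrix.smul_of, Matrix.of_add_of, Matrix.smul_cons, Matrix.smul_empty, Matrix.cons_add_cons,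
    Matrix.empty_add_empty, smul_eq_mul, mul_zero, mul_one, add_zero, Fin.reduceSucc]
  ring_nf

theorem linearIndependent_gensFamily : LinearIndependent ℝ gensFamily := by
  have h : ⇑(Fintype.linearCombination ℝ gensFamily) = coordMatrix :=
    funext fun c => by rw [Fintype.linearCombination_apply, sum_smul_gensFamily]
  rw [linearIndependent_iff_injective_fintypeLinearCombination, h]
  exact coords_coordMatrix.injective

theorem mem_span_gens_iff {m : M6} : m ∈ Submodule.span ℝ gens ↔ m ∈ Set.range coordMatrix := by
  rw [← range_gensFamily, Submodule.mem_span_range_iff_exists_fun]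
  simp only [sum_smul_gensFamily, Set.mem_range]

theorem lie_coordMatrix_mem_range (c d : Fin 12 → ℝ) :
    ⁅coordMatrix c, coordMatrix d⁆ ∈ Set.range coordMatrix := by
  refine ⟨coords ⁅coordMatrix c, coordMatrix d⁆, ?_⟩
  simp only [coords, coordMatrix, Ring.lie_def, Fin.isValue, cons_mul, Nat.succ_eq_add_one,
    Nat.reduceAdd, vecMul_cons, head_cons, smul_cons, smul_eq_mul, mul_zero, smul_empty, tail_cons,
    zero_smul, mul_neg, empty_vecMul, add_zero, zero_add, add_cons, empty_add_empty, neg_smul,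
    neg_cons, neg_zero, neg_empty, empty_mul, Equiv.symm_apply_apply, Matrix.sub_apply, of_apply,
    cons_val', cons_val, cons_val_fin_one, cons_val_zero, cons_val_one, ne_eq,
    OfNat.ofNat_ne_zero, not_false_eq_true, mul_div_cancel_left₀, add_sub_cancel_right, neg_sub,
    of_sub_of, sub_cons, sub_self, zero_empty, EmbeddingLike.apply_eq_iff_eq, vecCons_inj,
    and_true, true_and]
  and_intros <;> ring

end

theorem basis_independent_and_span_closed_under_bracket :
    LinearIndependent ℝ (![E1, E2, E3, E31, E32, A1, A2, A3, A31, A32, W1, W2] : Fin 12 → M6) ∧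
    ∀ x ∈ Submodule.span ℝ gens, ∀ y ∈ Submodule.span ℝ gens,
      ⁅x, y⁆ ∈ Submodule.span ℝ gens := by
  refine ⟨linearIndependent_gensFamily, fun x hx y hy => ?_⟩
  obtain ⟨c, rfl⟩ := mem_span_gens_iff.1 hx
  obtain ⟨d, rfl⟩ := mem_span_gens_iff.1 hy
  exact mem_span_gens_iff.2 (lie_coordMatrix_mem_range c d)
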